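/- Let N be a positive integer and t > -log N. For all n ≥ N, (1/24)∫_{n+1}^∞ dx/(x^2(t+log x)^2) ≤ η(t,N) - η_{n-1}(t,N) ≤ (1/24)∫_n^∞ dx/(x^2(t+log x)^2), where η_n(t,N) = Σ_{k=N}^n (1/(t+log(k+1/2)) - 1/(H_k - γ + t)) and η(t,N) = lim_{m→∞} η_m(t,N). -/

import Mathlib

/-!
Write `a_k = H_k - γ` and `b_k = log (k + 1/2)`, so that the `k`-th term of `η` is
`(a_k - b_k) / ((t + b_k) (t + a_k))`. DeTemple's bounds
`1 / (24 (k+1)²) ≤ a_k - b_k ≤ 1 / (24 (k+1/2)²)` follow by telescoping: with `m = k + 1`,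
`(a_k - b_k) - (a_{k+1} - b_{k+1}) = log ((m+1/2) / (m-1/2)) - 1/m`, which is controlled by the
series `log ((m+1/2) / (m-1/2)) = Σ_j 2 / (2j+1) · (2m)^-(2j+1)`.
Together with `a_k, b_k ≤ log (k+1)` they squeeze the `k`-th term between `g (k+1) / 24` and
`g (k+1/2) / 24`, where `g x = 1 / (x² (t + log x)²)`. As `g` decreases,
`g (k+1) ≥ ∫_{k+1}^{k+2} g`. As `h x = x (t + log x)` satisfies `h (m-s) h (m+s) ≤ h m ²`,
the function `g = 1 / h²` satisfies `g (m-s) + g (m+s) ≥ 2 g m`,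
hence `g (k+1/2) ≤ ∫_k^{k+1} g`.
Summing over `k ≥ n` gives both bounds in the limit.
-/

open Real Filter MeasureTheory Finset Topology

/-- The sequence `η_n(t,N) = Σ_{k=N}^n (1/(t+log(k+1/2)) - 1/(H_k - γ + t))`. -/
noncomputable def eta (N : ℕ) (t : ℝ) (n : ℕ) : ℝ :=
  ∑ k ∈ Finset.Icc N n,
    (1 / (t + Real.log ((k : ℝ) + 1/2)) -
      1 / ((harmonic k : ℝ) - Real.eulerMascheroniConstant + t))

lemma hasSum_log_add_half_sub_log_sub_half {m : ℝ} (hm : 1 / 2 < m) :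
    HasSum (fun k : ℕ => 2 * (1 / (2 * k + 1)) * (1 / (2 * m)) ^ (2 * k + 1))
      (log (m + 1 / 2) - log (m - 1 / 2)) := by
  have hm' : m * 2 - 1 ≠ 0 := by linarith
  convert hasSum_log_one_add_inv (a := m - 1 / 2) (by linarith) using 1
  · ext k; congr 3; ring
  · rw [← log_div (by linarith) (by linarith)]
    congr 1
    field_simp
    ring

lemma one_div_sq_sub_one_div_sq_le_log_sub_log_sub_inv {m : ℝ} (hm : 1 / 2 < m) :
    1 / (24 * m ^ 2) - 1 / (24 * (m + 1) ^ 2) ≤ log (m + 1 / 2) - log (m - 1 / 2) - 1 / m := by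
  have hm0 : 0 < m := by linarith
  have hsum := sum_le_hasSum (range 2) (fun k _ => by positivity)
    (hasSum_log_add_half_sub_log_sub_half hm)
  have hfirst : ∑ k ∈ range 2, 2 * (1 / (2 * (k : ℝ) + 1)) * (1 / (2 * m)) ^ (2 * k + 1)
      = 1 / m + 1 / (12 * m ^ 3) := by
    simp only [sum_range_succ, sum_range_zero]
    norm_num
    field_simp
    ring
  have hcubic : 1 / (24 * m ^ 2) - 1 / (24 * (m + 1) ^ 2) ≤ 1 / (12 * m ^ 3) := by
    rw [div_sub_div _ _ (by positivity) (by positivity),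
      div_le_div_iff₀ (by positivity) (by positivity)]
    nlinarith
  linarith

lemma log_sub_log_sub_inv_le_one_div_sq_sub_one_div_sq {m : ℝ} (hm : 1 / 2 < m) :
    log (m + 1 / 2) - log (m - 1 / 2) - 1 / m ≤
      1 / (24 * (m - 1 / 2) ^ 2) - 1 / (24 * (m + 1 / 2) ^ 2) := by
  have hm0 : 0 < m := by linarith
  set x := 1 / (2 * m) with hx
  have hx0 : 0 ≤ x := by positivity
  have hx1 : x ^ 2 < 1 := by
    rw [hx, div_pow, div_lt_one (by positivity)]
    nlinarith
  -- the tail beyond the first term is dominated by the geometric series `2/3 · x³ · Σ x^(2k)`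
  have htail := (hasSum_nat_add_iff' 1).mpr (hasSum_log_add_half_sub_log_sub_half hm)
  have hgeom := (hasSum_geometric_of_lt_one (sq_nonneg x) hx1).mul_left (2 / 3 * x ^ 3)
  have hle := hasSum_le (fun k => ?_) htail hgeom
  · simp only [sum_range_one, Nat.cast_zero, mul_zero, zero_add, pow_one] at hle
    have hm2 : 4 * m ^ 2 - 1 ≠ 0 := by nlinarith
    have hgeom_eq : 2 / 3 * x ^ 3 * (1 - x ^ 2)⁻¹ = 1 / (3 * m * (4 * m ^ 2 - 1)) := by
      rw [hx]
      field_simp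
      ring
    have hfinal : 1 / (3 * m * (4 * m ^ 2 - 1)) ≤
        1 / (24 * (m - 1 / 2) ^ 2) - 1 / (24 * (m + 1 / 2) ^ 2) := by
      have hpos : 0 < 4 * m ^ 2 - 1 := by nlinarith
      rw [div_sub_div _ _ (by positivity) (by positivity),
        div_le_div_iff₀ (by positivity) (by positivity)]
      nlinarith
    have : 2 * (1 / (2 * 0 + 1)) * x = 1 / m := by rw [hx]; field_simp; ring
    linarith
  · have hk : (1 : ℝ) / (2 * ((k + 1 : ℕ) : ℝ) + 1) ≤ 1 / 3 := by
      rw [div_le_div_iff₀ (by positivity) (by positivity)]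
      push_cast; linarith [(k.cast_nonneg : (0 : ℝ) ≤ k)]
    calc 2 * (1 / (2 * ((k + 1 : ℕ) : ℝ) + 1)) * x ^ (2 * (k + 1) + 1)
        ≤ 2 * (1 / 3) * x ^ (2 * (k + 1) + 1) := by gcongr
      _ = 2 / 3 * x ^ 3 * (x ^ 2) ^ k := by rw [← pow_mul]; ring

lemma le_sub_of_tendsto_of_sub_succ_le {d f : ℕ → ℝ} {l : ℝ} (hd : Tendsto d atTop (𝓝 l))
    (hf : Tendsto f atTop (𝓝 0)) (h : ∀ k, f k - f (k + 1) ≤ d k - d (k + 1)) (k : ℕ) :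
    f k ≤ d k - l := by
  have hanti : Antitone fun k => d k - f k := antitone_nat_of_succ_le fun k => by linarith [h k]
  have := hanti.le_of_tendsto (by simpa using hd.sub hf) k
  linarith

lemma sub_le_of_tendsto_of_sub_succ_le {d f : ℕ → ℝ} {l : ℝ} (hd : Tendsto d atTop (𝓝 l))
    (hf : Tendsto f atTop (𝓝 0)) (h : ∀ k, d k - d (k + 1) ≤ f k - f (k + 1)) (k : ℕ) :
    d k - l ≤ f k := by
  have := le_sub_of_tendsto_of_sub_succ_le (d := fun k => -d k) (f := fun k => -f k) hd.neg
    (by simpa using hf.neg) (fun k => by linarith [h k]) k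
  linarith

lemma tendsto_one_div_mul_add_sq {a : ℝ} (ha : 0 < a) (c : ℝ) :
    Tendsto (fun k : ℕ => 1 / (a * ((k : ℝ) + c) ^ 2)) atTop (𝓝 0) := by
  have hlin : Tendsto (fun k : ℕ => (k : ℝ) + c) atTop atTop :=
    tendsto_atTop_add_const_right _ c tendsto_natCast_atTop_atTop
  simpa only [one_div, Function.comp_def, Pi.inv_def] using
    (((tendsto_pow_atTop two_ne_zero).comp hlin).const_mul_atTop ha).inv_tendsto_atTop

lemma tendsto_harmonic_sub_log_add_half :
    Tendsto (fun k : ℕ => (harmonic k : ℝ) - log (k + 1 / 2)) atTop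
      (𝓝 eulerMascheroniConstant) := by
  have hhalf :
      Tendsto (fun k : ℕ => log ((k : ℝ) + 1 / 2 + 1 / 2) - log (k + 1 / 2)) atTop (𝓝 0) :=
    (tendsto_log_comp_add_sub_log (1 / 2)).comp
      (tendsto_atTop_add_const_right _ _ tendsto_natCast_atTop_atTop)
  convert tendsto_harmonic_sub_log_add_one.add hhalf using 2 with k
  · ring_nf
  · simp

lemma harmonic_sub_log_add_half_sub_succ (k : ℕ) :
    ((harmonic k : ℝ) - log (k + 1 / 2)) -
        ((harmonic (k + 1) : ℝ) - log ((k + 1 : ℕ) + 1 / 2)) =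
      log (((k : ℝ) + 1) + 1 / 2) - log (((k : ℝ) + 1) - 1 / 2) - 1 / ((k : ℝ) + 1) := by
  rw [harmonic_succ]
  push_cast
  ring_nf

lemma one_div_le_harmonic_sub_eulerMascheroniConstant_sub_log (k : ℕ) :
    1 / (24 * ((k : ℝ) + 1) ^ 2) ≤ harmonic k - eulerMascheroniConstant - log (k + 1 / 2) := by
  have := le_sub_of_tendsto_of_sub_succ_le tendsto_harmonic_sub_log_add_half
    (tendsto_one_div_mul_add_sq (by norm_num : (0 : ℝ) < 24) 1) (fun j => ?_) k
  · linarith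
  · rw [harmonic_sub_log_add_half_sub_succ]
    push_cast
    exact one_div_sq_sub_one_div_sq_le_log_sub_log_sub_inv (by linarith [j.cast_nonneg (α := ℝ)])

lemma harmonic_sub_eulerMascheroniConstant_sub_log_le (k : ℕ) :
    harmonic k - eulerMascheroniConstant - log (k + 1 / 2) ≤
      1 / (24 * ((k : ℝ) + 1 / 2) ^ 2) := by
  have := sub_le_of_tendsto_of_sub_succ_le tendsto_harmonic_sub_log_add_half
    (tendsto_one_div_mul_add_sq (by norm_num : (0 : ℝ) < 24) (1 / 2)) (fun j => ?_) k
  · linarith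
  · rw [harmonic_sub_log_add_half_sub_succ]
    convert log_sub_log_sub_inv_le_one_div_sq_sub_one_div_sq (m := (j : ℝ) + 1)
      (by linarith [j.cast_nonneg (α := ℝ)]) using 4
    · ring
    · push_cast; ring

lemma two_mul_mul_le_intervalIntegral_of_le_add {f : ℝ → ℝ} {m r : ℝ} (hr : 0 ≤ r)
    (hf : IntervalIntegrable f volume (m - r) (m + r))
    (h : ∀ s ∈ Set.Icc 0 r, 2 * f m ≤ f (m - s) + f (m + s)) :
    2 * r * f m ≤ ∫ x in (m - r)..(m + r), f x := by
  have hleft : IntervalIntegrable f volume (m - r) m :=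
    hf.mono_set (Set.uIcc_subset_uIcc Set.left_mem_uIcc
      (Set.mem_uIcc_of_le (by linarith) (by linarith)))
  have hright : IntervalIntegrable f volume m (m + r) :=
    hf.mono_set (Set.uIcc_subset_uIcc (Set.mem_uIcc_of_le (by linarith) (by linarith))
      Set.right_mem_uIcc)
  have hleft' : IntervalIntegrable (fun s => f (m - s)) volume 0 r := by
    simpa using (hleft.comp_sub_left m).symm
  have hright' : IntervalIntegrable (fun s => f (m + s)) volume 0 r := by
    simpa using hright.comp_add_left m
  calc 2 * r * f m = ∫ _ in (0 : ℝ)..r, 2 * f m := by simp; ring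
    _ ≤ ∫ s in (0 : ℝ)..r, (f (m - s) + f (m + s)) :=
      intervalIntegral.integral_mono_on hr intervalIntegrable_const (hleft'.add hright') h
    _ = (∫ x in (m - r)..m, f x) + ∫ x in m..(m + r), f x := by
      rw [intervalIntegral.integral_add hleft' hright', intervalIntegral.integral_comp_sub_left,
        intervalIntegral.integral_comp_add_left, sub_zero, add_zero]
    _ = ∫ x in (m - r)..(m + r), f x :=
      intervalIntegral.integral_add_adjacent_intervals hleft hright

lemma add_log_pos_of_le {t c x : ℝ} (hc : 0 < c) (ht : 0 < t + log c) (hx : c ≤ x) :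
    0 < t + log x := by
  linarith [log_le_log hc hx]

lemma antitoneOn_one_div_sq_mul_add_log_sq {t c : ℝ} (hc : 0 < c) (ht : 0 < t + log c) :
    AntitoneOn (fun x => 1 / (x ^ 2 * (t + log x) ^ 2)) (Set.Ici c) := by
  intro x hx y hy hxy
  have hx0 : 0 < x := hc.trans_le hx
  have htx := add_log_pos_of_le hc ht hx
  simp only
  gcongr

lemma integrableOn_Ioi_one_div_sq_mul_add_log_sq {t c : ℝ} (hc : 0 < c) (ht : 0 < t + log c) :
    IntegrableOn (fun x => 1 / (x ^ 2 * (t + log x) ^ 2)) (Set.Ioi c) := by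
  have hdom : IntegrableOn (fun x : ℝ => ((t + log c) ^ 2)⁻¹ * x ^ (-2 : ℝ)) (Set.Ioi c) :=
    (integrableOn_Ioi_rpow_of_lt (by norm_num) hc).const_mul _
  refine hdom.mono' (Measurable.aestronglyMeasurable (by fun_prop)) ?_
  filter_upwards [ae_restrict_mem measurableSet_Ioi] with x hx
  have hx0 : 0 < x := hc.trans hx
  have htx := add_log_pos_of_le hc ht (le_of_lt hx)
  rw [Real.norm_of_nonneg (by positivity), rpow_neg hx0.le, rpow_two, ← mul_inv, one_div,
    mul_comm (x ^ 2)]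
  gcongr
  exact hx.le

lemma mul_add_log_mul_mul_add_log_le_sq {t m s : ℝ} (hs : 0 ≤ s) (hms : 0 < m - s)
    (ht : 0 < t + log (m - s)) :
    (m - s) * (t + log (m - s)) * ((m + s) * (t + log (m + s))) ≤ (m * (t + log m)) ^ 2 := by
  have hm : 0 < m := by linarith
  have htm : 0 < t + log (m + s) := add_log_pos_of_le hms ht (by linarith)
  have hprod : (m - s) * (m + s) ≤ m ^ 2 := by nlinarith
  have hlog : log (m - s) + log (m + s) ≤ 2 * log m := by
    rw [← log_mul hms.ne' (by linarith), ← log_rpow hm, rpow_two]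
    exact log_le_log (by positivity) hprod
  have hlogprod : (t + log (m - s)) * (t + log (m + s)) ≤ (t + log m) ^ 2 := by
    nlinarith [sq_nonneg (log (m - s) - log (m + s))]
  calc (m - s) * (t + log (m - s)) * ((m + s) * (t + log (m + s)))
      = ((m - s) * (m + s)) * ((t + log (m - s)) * (t + log (m + s))) := by ring
    _ ≤ m ^ 2 * (t + log m) ^ 2 := by gcongr
    _ = (m * (t + log m)) ^ 2 := by ring

lemma two_mul_one_div_sq_mul_add_log_sq_le {t m s : ℝ} (hs : 0 ≤ s) (hms : 0 < m - s)
    (ht : 0 < t + log (m - s)) :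
    2 * (1 / (m ^ 2 * (t + log m) ^ 2)) ≤
      1 / ((m - s) ^ 2 * (t + log (m - s)) ^ 2) + 1 / ((m + s) ^ 2 * (t + log (m + s)) ^ 2) := by
  have htm : 0 < t + log (m + s) := add_log_pos_of_le hms ht (by linarith)
  set A := (m - s) * (t + log (m - s))
  set B := (m + s) * (t + log (m + s))
  have hA : 0 < A := by positivity
  have hms' : 0 < m + s := by linarith
  have hB : 0 < B := by positivity
  have hAB := mul_add_log_mul_mul_add_log_le_sq hs hms ht
  calc 2 * (1 / (m ^ 2 * (t + log m) ^ 2)) = 2 / (m * (t + log m)) ^ 2 := by ring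
    _ ≤ 2 / (A * B) := by gcongr
    _ ≤ 1 / A ^ 2 + 1 / B ^ 2 := by
      rw [div_add_div _ _ (by positivity) (by positivity),
        div_le_div_iff₀ (by positivity) (by positivity)]
      nlinarith [sq_nonneg (A - B), mul_pos hA hB]
    _ = _ := by ring

noncomputable def etaTerm (t : ℝ) (k : ℕ) : ℝ :=
  1 / (t + log ((k : ℝ) + 1 / 2)) - 1 / ((harmonic k : ℝ) - eulerMascheroniConstant + t)

lemma eta_eq_sum_etaTerm (N : ℕ) (t : ℝ) (n : ℕ) :
    eta N t n = ∑ k ∈ Icc N n, etaTerm t k := rfl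

lemma etaTerm_eq_div {t : ℝ} {k : ℕ} (ht : 0 < t + log ((k : ℝ) + 1 / 2))
    (ht' : 0 < t + ((harmonic k : ℝ) - eulerMascheroniConstant)) :
    etaTerm t k = ((harmonic k - eulerMascheroniConstant) - log ((k : ℝ) + 1 / 2)) /
      ((t + log ((k : ℝ) + 1 / 2)) * (t + (harmonic k - eulerMascheroniConstant))) := by
  rw [etaTerm, add_comm _ t, div_sub_div _ _ ht.ne' ht'.ne']
  ring

lemma intervalIntegral_le_etaTerm {t : ℝ} {k : ℕ} (hk : 0 < k) (ht : 0 < t + log k) :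
    (1 / 24) * ∫ x in ((k : ℝ) + 1)..((k : ℝ) + 2), 1 / (x ^ 2 * (t + log x) ^ 2) ≤
      etaTerm t k := by
  have hk0 : (0 : ℝ) < k := by exact_mod_cast hk
  set a := (harmonic k : ℝ) - eulerMascheroniConstant
  set b := log ((k : ℝ) + 1 / 2)
  have htb : 0 < t + b := add_log_pos_of_le hk0 ht (by linarith)
  have hab : 1 / (24 * ((k : ℝ) + 1) ^ 2) ≤ a - b :=
    one_div_le_harmonic_sub_eulerMascheroniConstant_sub_log k
  have hab0 : 0 < 1 / (24 * ((k : ℝ) + 1) ^ 2) := by positivity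
  have hta : 0 < t + a := by linarith
  have ha : a ≤ log ((k : ℝ) + 1) := by
    have := eulerMascheroniSeq_lt_eulerMascheroniConstant k
    rw [eulerMascheroniSeq] at this
    linarith
  have hb : b ≤ log ((k : ℝ) + 1) := log_le_log (by positivity) (by linarith)
  have hanti : AntitoneOn (fun x => 1 / (x ^ 2 * (t + log x) ^ 2))
      (Set.Icc ((k : ℝ) + 1) ((k : ℝ) + 1 + (1 : ℕ))) :=
    (antitoneOn_one_div_sq_mul_add_log_sq (by positivity)
      (add_log_pos_of_le hk0 ht (by linarith))).mono Set.Icc_subset_Ici_self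
  have hint := hanti.integral_le_sum
  simp only [Nat.cast_one, range_one, sum_singleton, CharP.cast_eq_zero, add_zero] at hint
  rw [show (k : ℝ) + 1 + 1 = (k : ℝ) + 2 by ring] at hint
  rw [etaTerm_eq_div htb hta]
  calc (1 / 24) * ∫ x in ((k : ℝ) + 1)..((k : ℝ) + 2), 1 / (x ^ 2 * (t + log x) ^ 2)
      ≤ (1 / 24) * (1 / (((k : ℝ) + 1) ^ 2 * (t + log ((k : ℝ) + 1)) ^ 2)) := by gcongr
    _ = (1 / (24 * ((k : ℝ) + 1) ^ 2)) / (t + log ((k : ℝ) + 1)) ^ 2 := by field_simp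
    _ ≤ (a - b) / ((t + b) * (t + a)) := by
      gcongr
      · linarith
      · nlinarith

lemma etaTerm_le_intervalIntegral {t : ℝ} {k : ℕ} (hk : 0 < k) (ht : 0 < t + log k) :
    etaTerm t k ≤
      (1 / 24) * ∫ x in (k : ℝ)..((k : ℝ) + 1), 1 / (x ^ 2 * (t + log x) ^ 2) := by
  have hk0 : (0 : ℝ) < k := by exact_mod_cast hk
  set a := (harmonic k : ℝ) - eulerMascheroniConstant
  set b := log ((k : ℝ) + 1 / 2)
  have htb : 0 < t + b := add_log_pos_of_le hk0 ht (by linarith)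
  have hab : a - b ≤ 1 / (24 * ((k : ℝ) + 1 / 2) ^ 2) :=
    harmonic_sub_eulerMascheroniConstant_sub_log_le k
  have hab' : 1 / (24 * ((k : ℝ) + 1) ^ 2) ≤ a - b :=
    one_div_le_harmonic_sub_eulerMascheroniConstant_sub_log k
  have hab0 : 0 < 1 / (24 * ((k : ℝ) + 1) ^ 2) := by positivity
  have hta : 0 < t + a := by linarith
  have hint : IntervalIntegrable (fun x => 1 / (x ^ 2 * (t + log x) ^ 2)) volume
      ((k : ℝ) + 1 / 2 - 1 / 2) ((k : ℝ) + 1 / 2 + 1 / 2) := by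
    refine ((antitoneOn_one_div_sq_mul_add_log_sq hk0 ht).mono ?_).intervalIntegrable
    rw [Set.uIcc_of_le (by linarith)]
    exact Set.Icc_subset_Ici_iff (by linarith) |>.mpr (by linarith)
  have hmid := two_mul_mul_le_intervalIntegral_of_le_add (by norm_num) hint fun s hs =>
    two_mul_one_div_sq_mul_add_log_sq_le hs.1 (by linarith [hs.2])
      (add_log_pos_of_le hk0 ht (by linarith [hs.2]))
  rw [show (k : ℝ) + 1 / 2 - 1 / 2 = k by ring, show (k : ℝ) + 1 / 2 + 1 / 2 = k + 1 by ring]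
    at hmid
  rw [etaTerm_eq_div htb hta]
  calc (a - b) / ((t + b) * (t + a))
      ≤ (1 / (24 * ((k : ℝ) + 1 / 2) ^ 2)) / ((t + b) * (t + b)) := by
        gcongr
        linarith
    _ = (1 / 24) * (2 * (1 / 2) * (1 / (((k : ℝ) + 1 / 2) ^ 2 * (t + b) ^ 2))) := by
        field_simp
    _ ≤ _ := by gcongr

lemma eta_add_sub_eta {N m : ℕ} (t : ℝ) (hm : N ≤ m + 1) (j : ℕ) :
    eta N t (m + j) - eta N t m = ∑ i ∈ range j, etaTerm t (m + 1 + i) := by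
  induction j with
  | zero => simp
  | succ j ih =>
    rw [← add_assoc, eta_eq_sum_etaTerm, sum_Icc_succ_top (by omega), ← eta_eq_sum_etaTerm,
      sum_range_succ, ← ih]
    ring_nf

lemma tendsto_sum_etaTerm {N n : ℕ} {t L : ℝ} (hn : N ≤ n) (hn0 : 0 < n)
    (hL : Tendsto (eta N t) atTop (𝓝 L)) :
    Tendsto (fun j => ∑ i ∈ range j, etaTerm t (n + i)) atTop (𝓝 (L - eta N t (n - 1))) := by
  refine ((hL.comp (tendsto_add_atTop_nat (n - 1))).sub_const (eta N t (n - 1))).congr fun j => ?_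
  rw [Function.comp_apply, add_comm j, eta_add_sub_eta t (by omega), Nat.sub_add_cancel hn0]

lemma tendsto_sum_intervalIntegral_Ioi {f : ℝ → ℝ} {a : ℝ}
    (hf : IntegrableOn f (Set.Ioi a)) :
    Tendsto (fun j : ℕ => ∑ i ∈ range j, ∫ x in (a + i)..(a + i + 1), f x) atTop
      (𝓝 (∫ x in Set.Ioi a, f x)) := by
  have hsum (j : ℕ) :
      ∑ i ∈ range j, ∫ x in (a + i)..(a + i + 1), f x = ∫ x in a..(a + j), f x := by
    have := intervalIntegral.sum_integral_adjacent_intervals (a := fun i : ℕ => a + i) (n := j)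
      (μ := volume) (f := f) fun i _ => by
        rw [intervalIntegrable_iff_integrableOn_Ioc_of_le (by push_cast; linarith)]
        exact hf.mono_set fun x hx => by
          simp only [Set.mem_Ioc, Set.mem_Ioi] at hx ⊢
          linarith [hx.1, (i.cast_nonneg : (0 : ℝ) ≤ i)]
    simpa [add_assoc] using this
  simp_rw [hsum]
  exact intervalIntegral_tendsto_integral_Ioi a hf
    (tendsto_atTop_add_const_left _ a tendsto_natCast_atTop_atTop)

theorem stmt_9 (N : ℕ) (hN : 0 < N) (t : ℝ) (ht : -Real.log N < t)
    (L : ℝ) (hL : Filter.Tendsto (eta N t) Filter.atTop (𝓝 L)) :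
    ∀ n : ℕ, N ≤ n →
      (1/24) * (∫ x in Set.Ioi ((n : ℝ) + 1), 1 / (x^2 * (t + Real.log x)^2)) ≤
        L - eta N t (n - 1) ∧
      L - eta N t (n - 1) ≤
        (1/24) * ∫ x in Set.Ioi (n : ℝ), 1 / (x^2 * (t + Real.log x)^2) := by
  intro n hn
  have hn0 : 0 < n := hN.trans_le hn
  have hpos {x : ℝ} (hx : n ≤ x) : 0 < t + log x :=
    add_log_pos_of_le (by exact_mod_cast hN) (by linarith) ((Nat.cast_le.mpr hn).trans hx)
  have htail := tendsto_sum_etaTerm hn hn0 hL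
  have hint {c : ℝ} (hc : n ≤ c) := integrableOn_Ioi_one_div_sq_mul_add_log_sq (t := t)
    ((Nat.cast_pos.mpr hn0).trans_le hc) (hpos hc)
  constructor
  · refine le_of_tendsto_of_tendsto'
      ((tendsto_sum_intervalIntegral_Ioi (hint (le_add_of_nonneg_right zero_le_one))).const_mul _)
      htail fun j => ?_
    rw [mul_sum]
    refine sum_le_sum fun i _ => ?_
    refine (le_of_eq ?_).trans
      (intervalIntegral_le_etaTerm (k := n + i) (by omega) (hpos (by simp)))
    congr 2 <;> push_cast <;> ring
  · refine le_of_tendsto_of_tendsto' htail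
      ((tendsto_sum_intervalIntegral_Ioi (hint le_rfl)).const_mul _) fun j => ?_
    rw [mul_sum]
    refine sum_le_sum fun i _ => ?_
    refine (etaTerm_le_intervalIntegral (k := n + i) (by omega) (hpos (by simp))).trans_eq ?_
    congr 2 <;> push_cast <;> ring
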